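/- For any integer C ≥ 2 and any integer i ≥ (200C²)^{2C}, the number of tuples (a_1,…,a_i) ∈ {0,1,…,C−1}^i with f_{i−1}(a_1,…,a_i) = 0 is at least C^i/(200C²). Equivalently, if a_1,…,a_i are chosen independently and uniformly at random from {0,…,C−1}, the probability that they ultimately iterate to 0 is at least 1/(200C²). -/

import Mathlib

/-- `iterDiff i a` is the sequence obtained from `a` after `i` iterations of
consecutive differencing: `iterDiff i a r = f_i(a_r, a_{r+1}, …, a_{r+i})`. -/
def iterDiff (i : ℕ) (a : ℕ → ℕ) : ℕ → ℕ :=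
  (fun b n => Nat.dist (b n) (b (n + 1)))^[i] a

/-- Extend a tuple `x ∈ {0,…,C−1}^M` to a sequence `ℕ → ℕ` (by `0` outside). -/
def extend (M C : ℕ) (x : Fin M → Fin C) : ℕ → ℕ :=
  fun n => if h : n < M then (x ⟨n, h⟩ : ℕ) else 0


/-!
Sort the words of length `n` by their apex `f_{n-1}`. Moving one letter by one moves the entry of
the difference triangle above it by one, as long as the letters in between are fixed; so among the
`C` words that differ only in that letter, at most `⌈C/2⌉` keep the entry in a set without two
consecutive values, such as `{1}` or `{0, u}` with `u ≥ 2`. Thus the apex is `1` for at most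
`⌈C/2⌉/C ≤ 2/3` of the words. If the apex is `u ≥ 2`, the maxima of the rows of the triangle
decrease from at most `C - 1` to at least `2`, so they are constant over some block of `L ≈ n/C`
rows; below the top entry of that block, a window of length `L` of a row takes only the values `0`
and `u`.
Peeling off the letters under such a window one at a time bounds these words by `(2/3)^L` of all
words for each of the `≤ C n²` choices of `u`, row and position, which is `≤ 1/12` for
`n ≥ 4608 C⁴`. Hence at least a quarter of the words have apex `0`.
-/

open Finset

theorem forall_of_iff_succ {P : ℕ → Prop} {a b k₀ : ℕ} (ha : a ≤ k₀) (hb : k₀ ≤ b) (h₀ : P k₀)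
    (step : ∀ k, a ≤ k → k < b → (P k ↔ P (k + 1))) : ∀ k, a ≤ k → k ≤ b → P k := by
  have hbase : ∀ k, a ≤ k → k ≤ b → (P k ↔ P a) := by
    intro k hak
    induction k, hak using Nat.le_induction with
    | base => exact fun _ => Iff.rfl
    | succ k hak ih => exact fun hk => (step k hak (by omega)).symm.trans (ih (by omega))
  exact fun k hak hkb => (hbase k hak hkb).2 ((hbase k₀ ha hb).1 h₀)

theorem iterDiff_succ_apply (t : ℕ) (a : ℕ → ℕ) (j : ℕ) :
    iterDiff (t + 1) a j = Nat.dist (iterDiff t a j) (iterDiff t a (j + 1)) := by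
  rw [iterDiff, Function.iterate_succ_apply']
  rfl

theorem iterDiff_add (s r : ℕ) (a : ℕ → ℕ) : iterDiff (s + r) a = iterDiff s (iterDiff r a) := by
  rw [iterDiff, iterDiff, iterDiff, Function.iterate_add_apply]

theorem iterDiff_congr {a b : ℕ → ℕ} {t j : ℕ} (h : ∀ k, j ≤ k → k ≤ j + t → a k = b k) :
    iterDiff t a j = iterDiff t b j := by
  induction t generalizing j with
  | zero => exact h j le_rfl (by omega)
  | succ t ih =>
    rw [iterDiff_succ_apply, iterDiff_succ_apply, ih fun k h₁ h₂ => h k h₁ (by omega),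
      ih fun k h₁ h₂ => h k (by omega) (by omega)]

theorem iterDiff_le_of_le {a : ℕ → ℕ} {t j c : ℕ} (h : ∀ k, j ≤ k → k ≤ j + t → a k ≤ c) :
    iterDiff t a j ≤ c := by
  induction t generalizing j with
  | zero => exact h j le_rfl (by omega)
  | succ t ih =>
    have h₁ := ih (j := j) fun k h₁ h₂ => h k h₁ (by omega)
    have h₂ := ih (j := j + 1) fun k h₁ h₂ => h k (by omega) (by omega)
    rw [iterDiff_succ_apply, Nat.dist]
    omega

-- `|u - v|` and `|u - v'|` differ by one whenever `v` and `v'` do.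
theorem iterDiff_dist_eq_one {a b : ℕ → ℕ} {t j : ℕ} (h : ∀ k, j ≤ k → k < j + t → a k = b k)
    (hlast : Nat.dist (a (j + t)) (b (j + t)) = 1) :
    Nat.dist (iterDiff t a j) (iterDiff t b j) = 1 := by
  induction t generalizing j with
  | zero => exact hlast
  | succ t ih =>
    have heq : iterDiff t a j = iterDiff t b j := iterDiff_congr fun k h₁ h₂ => h k h₁ (by omega)
    have hone := ih (j := j + 1) (fun k h₁ h₂ => h k (by omega) (by omega))
      (by rwa [show j + 1 + t = j + (t + 1) by omega])
    rw [iterDiff_succ_apply, iterDiff_succ_apply, heq]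
    simp only [Nat.dist] at hone ⊢
    omega

theorem eq_zero_or_eq_of_iterDiff_eq {b : ℕ → ℕ} {s p u : ℕ}
    (hle : ∀ k, p ≤ k → k ≤ p + s → b k ≤ u) (htop : iterDiff s b p = u) :
    ∀ k, p ≤ k → k ≤ p + s → b k = 0 ∨ b k = u := by
  induction s generalizing b with
  | zero =>
    intro k h₁ h₂
    obtain rfl : k = p := by omega
    exact Or.inr htop
  | succ s ih =>
    rcases Nat.eq_zero_or_pos u with rfl | hu
    · exact fun k h₁ h₂ => Or.inl (Nat.le_zero.1 (hle k h₁ h₂))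
    set d := iterDiff 1 b
    have hd_apply : ∀ k, d k = Nat.dist (b k) (b (k + 1)) := fun _ => rfl
    have hdle : ∀ k, p ≤ k → k ≤ p + s → d k ≤ u := by
      intro k h₁ h₂
      have := hle k h₁ (by omega)
      have := hle (k + 1) (by omega) (by omega)
      rw [hd_apply, Nat.dist]
      omega
    have htop' : iterDiff s d p = u := by rwa [← iterDiff_add]
    have hd := ih hdle htop'
    -- otherwise the top would be `0`
    obtain ⟨k₀, hk₀p, hk₀s, hk₀⟩ : ∃ k₀, p ≤ k₀ ∧ k₀ ≤ p + s ∧ d k₀ = u := by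
      by_contra! hne
      have : iterDiff s d p ≤ 0 :=
        iterDiff_le_of_le fun k h₁ h₂ => ((hd k h₁ h₂).resolve_right (hne k h₁ h₂)).le
      omega
    refine forall_of_iff_succ (k₀ := k₀) (by omega) (by omega) ?_ fun k h₁ h₂ => ?_
    · have := hle k₀ hk₀p (by omega)
      have := hle (k₀ + 1) (by omega) (by omega)
      rw [hd_apply, Nat.dist] at hk₀
      omega
    · have := hle k h₁ (by omega)
      have := hle (k + 1) (by omega) (by omega)
      have := hd k h₁ (by omega)
      rw [hd_apply, Nat.dist] at this
      omega

theorem extend_le {n C : ℕ} (x : Fin n → Fin C) (k : ℕ) : extend n C x k ≤ C - 1 := by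
  unfold extend
  split_ifs with hk
  · have := (x ⟨k, hk⟩).isLt
    omega
  · exact Nat.zero_le _

theorem extend_val {n C : ℕ} (x : Fin n → Fin C) (q : Fin n) : extend n C x q = x q := by
  simp [extend]

theorem extend_eq_of_ne {n C : ℕ} {x y : Fin n → Fin C} {q : Fin n} (h : ∀ j ≠ q, x j = y j)
    {k : ℕ} (hk : k ≠ q) : extend n C x k = extend n C y k := by
  unfold extend
  split_ifs with hkn
  · rw [h _ fun h' => hk (congrArg Fin.val h')]
  · rfl

theorem card_le_div_two_of_add_one_notMem {A : Finset ℕ} {C : ℕ} (hA : A ⊆ range C)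
    (h : ∀ a ∈ A, a + 1 ∉ A) : #A ≤ (C + 1) / 2 := by
  -- halving is injective on a set without two consecutive elements
  calc #A ≤ #(range ((C + 1) / 2)) := by
        refine card_le_card_of_injOn (· / 2) (fun a ha => ?_) fun a ha b hb hab => ?_
        · have := mem_range.1 (hA ha)
          simp only [coe_range, Set.mem_Iio]
          omega
        · have := h a ha
          have := h b hb
          simp only at hab
          by_contra hne
          rcases (show b = a + 1 ∨ a = b + 1 by omega) with rfl | rfl <;> contradiction
    _ = (C + 1) / 2 := card_range _

theorem card_mul_card_le_of_update {ι α : Type*} [Fintype ι] [DecidableEq ι] [Fintype α]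
    [DecidableEq α] (q : ι) {s t : Finset (ι → α)} {k : ℕ}
    (hst : ∀ x ∈ s, ∀ v, Function.update x q v ∈ t)
    (hs : ∀ y : ι → α, #{x ∈ s | ∀ j ≠ q, x j = y j} ≤ k) :
    #s * Fintype.card α ≤ #t * k := by
  refine card_mul_le_card_mul (fun x y : ι → α => ∀ j ≠ q, x j = y j) (fun x hx => ?_)
    fun y _ => hs y
  calc Fintype.card α = #(univ.image (Function.update x q)) :=
        (card_image_of_injective _ (Function.update_injective x q)).symm
    _ ≤ #(t.bipartiteAbove (fun x y => ∀ j ≠ q, x j = y j) x) := by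
        refine card_le_card fun y hy => ?_
        obtain ⟨v, -, rfl⟩ := mem_image.1 hy
        exact mem_filter.2 ⟨hst x hx v, fun j hj => (Function.update_of_ne hj v x).symm⟩

theorem card_mul_le_of_update_of_ne_add_one {ι : Type*} [Fintype ι] [DecidableEq ι] {C : ℕ}
    (q : ι) {s t : Finset (ι → Fin C)}
    (hst : ∀ x ∈ s, ∀ v, Function.update x q v ∈ t)
    (hs : ∀ x ∈ s, ∀ y ∈ s, (∀ j ≠ q, x j = y j) → (y q : ℕ) ≠ x q + 1) :
    #s * C ≤ #t * ((C + 1) / 2) := by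
  simpa using card_mul_card_le_of_update q hst fun (y : ι → Fin C) => by
    set F := {x ∈ s | ∀ j ≠ q, x j = y j}
    have hF : ∀ x ∈ F, ∀ x' ∈ F, ∀ j ≠ q, x j = x' j := fun x hx x' hx' j hj => by
      rw [(mem_filter.1 hx).2 j hj, (mem_filter.1 hx').2 j hj]
    have hinj : Set.InjOn (fun x : ι → Fin C => (x q : ℕ)) F := fun x hx x' hx' hxx' => by
      funext j
      by_cases hj : j = q
      · subst hj
        exact Fin.ext hxx'
      · exact hF x hx x' hx' j hj
    rw [← card_image_of_injOn hinj]
    refine card_le_div_two_of_add_one_notMem (fun a ha => ?_) fun a ha ha' => ?_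
    · obtain ⟨x, -, rfl⟩ := mem_image.1 ha
      exact mem_range.2 (x q).isLt
    · obtain ⟨x, hx, rfl⟩ := mem_image.1 ha
      obtain ⟨x', hx', hxx'⟩ := mem_image.1 ha'
      exact hs x (mem_filter.1 hx).1 x' (mem_filter.1 hx').1 (hF x hx x' hx') hxx'

def rowWindowWords (n C : ℕ) (S : Finset ℕ) (r p L : ℕ) : Finset (Fin n → Fin C) :=
  {x | ∀ j < L, iterDiff r (extend n C x) (p + j) ∈ S}

section RowWindowWords

variable {n C : ℕ} {S : Finset ℕ} {r p L : ℕ}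

theorem update_mem_rowWindowWords (h : p + L + r < n) {x : Fin n → Fin C}
    (hx : x ∈ rowWindowWords n C S r p (L + 1)) (v : Fin C) :
    Function.update x ⟨p + L + r, h⟩ v ∈ rowWindowWords n C S r p L := by
  simp only [rowWindowWords, mem_filter, mem_univ, true_and] at hx ⊢
  intro j hj
  rw [iterDiff_congr fun k _ hk =>
    extend_eq_of_ne (fun i hi => Function.update_of_ne hi v x) (by simp only; omega)]
  exact hx j (by omega)

theorem rowWindowWords_ne_add_one (hS : ∀ a ∈ S, a + 1 ∉ S) (h : p + L + r < n)
    {x y : Fin n → Fin C} (hx : x ∈ rowWindowWords n C S r p (L + 1))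
    (hy : y ∈ rowWindowWords n C S r p (L + 1)) (hxy : ∀ j ≠ ⟨p + L + r, h⟩, x j = y j) :
    (y ⟨p + L + r, h⟩ : ℕ) ≠ x ⟨p + L + r, h⟩ + 1 := by
  intro hsucc
  simp only [rowWindowWords, mem_filter, mem_univ, true_and] at hx hy
  have hone := iterDiff_dist_eq_one (a := extend n C x) (b := extend n C y) (t := r) (j := p + L)
    (fun k _ hk => extend_eq_of_ne hxy (by simp only; omega))
    (by rw [extend_val x ⟨_, h⟩, extend_val y ⟨_, h⟩, Nat.dist, hsucc]; omega)
  have hxS := hx L (by omega)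
  have hyS := hy L (by omega)
  rw [Nat.dist] at hone
  rcases (show iterDiff r (extend n C y) (p + L) = iterDiff r (extend n C x) (p + L) + 1 ∨
    iterDiff r (extend n C x) (p + L) = iterDiff r (extend n C y) (p + L) + 1 by omega) with h | h
  · exact hS _ hxS (h ▸ hyS)
  · exact hS _ hyS (h ▸ hxS)

theorem card_rowWindowWords_mul_le (hS : ∀ a ∈ S, a + 1 ∉ S) (L : ℕ) (hL : p + L + r ≤ n) :
    #(rowWindowWords n C S r p L) * C ^ L ≤ ((C + 1) / 2) ^ L * C ^ n := by
  induction L with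
  | zero => simp [rowWindowWords]
  | succ L ih =>
    have hq : p + L + r < n := by omega
    have hstep := card_mul_le_of_update_of_ne_add_one (C := C) ⟨p + L + r, hq⟩
      (fun x hx v => update_mem_rowWindowWords hq hx v)
      (fun x hx y hy hxy => rowWindowWords_ne_add_one hS hq hx hy hxy)
    calc #(rowWindowWords n C S r p (L + 1)) * C ^ (L + 1)
        = #(rowWindowWords n C S r p (L + 1)) * C * C ^ L := by ring
      _ ≤ #(rowWindowWords n C S r p L) * ((C + 1) / 2) * C ^ L := by gcongr
      _ = (C + 1) / 2 * (#(rowWindowWords n C S r p L) * C ^ L) := by ring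
      _ ≤ (C + 1) / 2 * (((C + 1) / 2) ^ L * C ^ n) := Nat.mul_le_mul_left _ (ih (by omega))
      _ = ((C + 1) / 2) ^ (L + 1) * C ^ n := by ring

end RowWindowWords

/-- Row `t` of the difference triangle of a word of length `n` has the `n - t` entries
`iterDiff t a j`, `j < n - t`. -/
def rowMax (n t : ℕ) (a : ℕ → ℕ) : ℕ :=
  (range (n - t)).sup (iterDiff t a)

theorem iterDiff_le_rowMax {n t j : ℕ} (a : ℕ → ℕ) (h : j + t < n) :
    iterDiff t a j ≤ rowMax n t a :=
  le_sup (mem_range.2 (by omega))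

theorem rowMax_le {n t c : ℕ} {a : ℕ → ℕ} (ha : ∀ k, a k ≤ c) : rowMax n t a ≤ c :=
  Finset.sup_le fun _ _ => iterDiff_le_of_le fun k _ _ => ha k

theorem antitone_rowMax (n : ℕ) (a : ℕ → ℕ) : Antitone fun t => rowMax n t a := by
  refine antitone_nat_of_succ_le fun t => Finset.sup_le fun j hj => ?_
  have h₁ := iterDiff_le_rowMax (n := n) a (t := t) (j := j) (by simp at hj; omega)
  have h₂ := iterDiff_le_rowMax (n := n) a (t := t) (j := j + 1) (by simp at hj; omega)
  rw [iterDiff_succ_apply, Nat.dist]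
  omega

theorem Antitone.exists_eq_of_lt_add {M : ℕ → ℕ} (hM : Antitone M) {m w : ℕ}
    (h : M 0 < M (m * (w + 1)) + m) : ∃ k < m, M (k * (w + 1)) = M (k * (w + 1) + w) := by
  by_contra! hne
  have hdrop : ∀ k ≤ m, M (k * (w + 1)) + k ≤ M 0 := by
    intro k hk
    induction k with
    | zero => simp
    | succ k ih =>
      have h₁ : M (k * (w + 1) + w) ≤ M (k * (w + 1)) := hM (by omega)
      have h₂ : M ((k + 1) * (w + 1)) ≤ M (k * (w + 1) + w) := hM (by rw [add_one_mul]; omega)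
      have h₃ := hne k (by omega)
      have := ih (by omega)
      omega
  have := hdrop m le_rfl
  omega

/-- Apply `eq_zero_or_eq_of_iterDiff_eq` below an entry of row `r + w` attaining its maximum. -/
theorem exists_window_of_rowMax_eq (a : ℕ → ℕ) {n r w : ℕ} (hrw : r + w < n)
    (h : rowMax n (r + w) a = rowMax n r a) :
    ∃ p, p + w + r < n ∧ ∀ j ≤ w,
      iterDiff r a (p + j) = 0 ∨ iterDiff r a (p + j) = rowMax n r a := by
  obtain ⟨p, hp, hpmax⟩ := exists_mem_eq_sup (range (n - (r + w)))
    ⟨0, mem_range.2 (by omega)⟩ (iterDiff (r + w) a)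
  rw [mem_range] at hp
  refine ⟨p, by omega, fun j hj =>
    eq_zero_or_eq_of_iterDiff_eq (b := iterDiff r a) (s := w) (p := p)
    (fun k _ hk => iterDiff_le_rowMax a (by omega)) ?_ (p + j) (by omega) (by omega)⟩
  rw [← iterDiff_add, add_comm, ← hpmax]
  exact h

/-- The row maxima decrease and lie in `[2, c]`, so they are constant over one of the first
`c - 1` blocks of `L` consecutive rows. -/
theorem exists_rowWindow_of_two_le_iterDiff {a : ℕ → ℕ} {c n L : ℕ} (ha : ∀ k, a k ≤ c)
    (hL : 1 ≤ L) (hcL : (c - 1) * L ≤ n - 1) (h2 : 2 ≤ iterDiff (n - 1) a 0) :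
    ∃ u r p, 2 ≤ u ∧ u ≤ c ∧ p + L + r ≤ n ∧
      ∀ j < L, iterDiff r a (p + j) ∈ ({0, u} : Finset ℕ) := by
  have hc : 2 ≤ c := h2.trans (iterDiff_le_of_le fun k _ _ => ha k)
  have hn : 1 ≤ n := by
    have : c - 1 ≤ (c - 1) * L := Nat.le_mul_of_pos_right _ hL
    omega
  obtain ⟨w, rfl⟩ : ∃ w, L = w + 1 := ⟨L - 1, by omega⟩
  have hM := antitone_rowMax n a
  have htwo : ∀ t ≤ n - 1, 2 ≤ rowMax n t a := fun t ht =>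
    h2.trans ((iterDiff_le_rowMax a (by omega)).trans (hM ht))
  obtain ⟨k, hk, hconst⟩ := hM.exists_eq_of_lt_add (m := c - 1) (w := w) (by
    have := rowMax_le (n := n) (t := 0) ha
    have := htwo _ hcL
    omega)
  have hkw : (k + 1) * (w + 1) ≤ (c - 1) * (w + 1) := Nat.mul_le_mul_right _ hk
  rw [add_one_mul] at hkw
  obtain ⟨p, hp, hwin⟩ := exists_window_of_rowMax_eq a (r := k * (w + 1)) (w := w) (by omega)
    hconst.symm
  refine ⟨rowMax n (k * (w + 1)) a, k * (w + 1), p, htwo _ (by omega), rowMax_le ha, by omega,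
    fun j hj => ?_⟩
  simpa using hwin j (by omega)

theorem card_iterDiff_eq_one_mul_le {n : ℕ} (C : ℕ) (hn : 1 ≤ n) :
    #{x : Fin n → Fin C | iterDiff (n - 1) (extend n C x) 0 = 1} * C ≤ (C + 1) / 2 * C ^ n := by
  have hset : ({x : Fin n → Fin C | iterDiff (n - 1) (extend n C x) 0 = 1} : Finset _) =
      rowWindowWords n C {1} (n - 1) 0 1 := by
    ext x
    simp [rowWindowWords]
  rw [hset]
  simpa using card_rowWindowWords_mul_le (n := n) (C := C) (S := {1}) (r := n - 1) (p := 0)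
    (by simp) 1 (by omega)

theorem card_two_le_iterDiff_mul_le {n C L : ℕ} (hL : 1 ≤ L) (hCL : (C - 2) * L ≤ n - 1) :
    #{x : Fin n → Fin C | 2 ≤ iterDiff (n - 1) (extend n C x) 0} * C ^ L ≤
      C * n ^ 2 * (((C + 1) / 2) ^ L * C ^ n) := by
  set I := {z ∈ range C ×ˢ range n ×ˢ range n | 2 ≤ z.1 ∧ z.2.2 + L + z.2.1 ≤ n}
  have hcover : ({x : Fin n → Fin C | 2 ≤ iterDiff (n - 1) (extend n C x) 0} : Finset _) ⊆
      I.biUnion fun z => rowWindowWords n C {0, z.1} z.2.1 z.2.2 L := by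
    intro x hx
    obtain ⟨u, r, p, hu, huC, hpr, hwin⟩ :=
      exists_rowWindow_of_two_le_iterDiff (n := n) (extend_le x) hL
      (by rwa [show C - 1 - 1 = C - 2 by omega]) (mem_filter.1 hx).2
    simp only [mem_biUnion, mem_filter, mem_product, mem_range, rowWindowWords, mem_univ,
      true_and, I]
    refine ⟨(u, r, p), ⟨⟨?_, ?_, ?_⟩, hu, hpr⟩, hwin⟩ <;> dsimp only <;> omega
  have hI : #I ≤ C * n ^ 2 :=
    (card_filter_le _ _).trans (by simp [card_product, sq])
  calc #{x : Fin n → Fin C | 2 ≤ iterDiff (n - 1) (extend n C x) 0} * C ^ L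
      ≤ (∑ z ∈ I, #(rowWindowWords n C {0, z.1} z.2.1 z.2.2 L)) * C ^ L :=
        Nat.mul_le_mul_right _ ((card_le_card hcover).trans card_biUnion_le)
    _ = ∑ z ∈ I, #(rowWindowWords n C {0, z.1} z.2.1 z.2.2 L) * C ^ L := sum_mul _ _ _
    _ ≤ ∑ _z ∈ I, ((C + 1) / 2) ^ L * C ^ n := sum_le_sum fun z hz => by
        obtain ⟨-, hz2, hzn⟩ := mem_filter.1 hz
        refine card_rowWindowWords_mul_le (fun a ha ha' => ?_) L hzn
        simp only [mem_insert, mem_singleton] at ha ha'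
        omega
    _ = #I * (((C + 1) / 2) ^ L * C ^ n) := by rw [sum_const, smul_eq_mul]
    _ ≤ C * n ^ 2 * (((C + 1) / 2) ^ L * C ^ n) := Nat.mul_le_mul_right _ hI

theorem choose_mul_two_pow_le_three_pow {L k : ℕ} (hk : k ≤ L) :
    L.choose k * 2 ^ (L - k) ≤ 3 ^ L :=
  calc L.choose k * 2 ^ (L - k) = 2 ^ (L - k) * 1 ^ (L - (L - k)) * L.choose (L - k) := by
        rw [Nat.choose_symm hk, one_pow, mul_one, mul_comm]
    _ ≤ ∑ j ∈ range (L + 1), 2 ^ j * 1 ^ (L - j) * L.choose j :=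
        single_le_sum (f := fun j => 2 ^ j * 1 ^ (L - j) * L.choose j)
          (fun _ _ => Nat.zero_le _) (mem_range.2 (by omega))
    _ = 3 ^ L := (add_pow 2 1 L).symm

theorem twelve_mul_two_pow_le_three_pow {N L : ℕ} (h : 96 * N ≤ L.choose 3) :
    12 * N * 2 ^ L ≤ 3 ^ L := by
  rcases lt_or_ge L 3 with hL | hL
  · rw [Nat.choose_eq_zero_of_lt hL] at h
    simp [show N = 0 by omega]
  calc 12 * N * 2 ^ L = 96 * N * 2 ^ (L - 3) := by
        rw [show L = L - 3 + 3 by omega, pow_add, Nat.add_sub_cancel]; ring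
    _ ≤ L.choose 3 * 2 ^ (L - 3) := Nat.mul_le_mul_right _ h
    _ ≤ 3 ^ L := choose_mul_two_pow_le_three_pow hL

theorem twelve_mul_div_two_pow_le_pow {N L C : ℕ} (hC : 2 ≤ C) (h : 96 * N ≤ L.choose 3) :
    12 * N * ((C + 1) / 2) ^ L ≤ C ^ L := by
  refine Nat.le_of_mul_le_mul_left ?_ (pow_pos (by norm_num : 0 < 3) L)
  calc 3 ^ L * (12 * N * ((C + 1) / 2) ^ L) = 12 * N * (3 * ((C + 1) / 2)) ^ L := by ring
    _ ≤ 12 * N * (2 * C) ^ L := Nat.mul_le_mul_left _ (Nat.pow_le_pow_left (by omega) L)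
    _ = 12 * N * 2 ^ L * C ^ L := by ring
    _ ≤ 3 ^ L * C ^ L := Nat.mul_le_mul_right _ (twelve_mul_two_pow_le_three_pow h)

theorem mul_sq_le_choose_three {n C : ℕ} (hC : 2 ≤ C) (hn : 4608 * C ^ 4 ≤ n) :
    96 * (C * n ^ 2) ≤ ((n - 1) / (C - 1)).choose 3 := by
  set L := (n - 1) / (C - 1)
  have hC4 : C ≤ C ^ 4 := Nat.le_self_pow (by norm_num) C
  have hLn : n ≤ C * (L + 1) := by
    have h₁ : n - 1 < (C - 1) * (L + 1) := Nat.lt_mul_div_succ _ (by omega)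
    have h₂ : (C - 1) * (L + 1) ≤ C * (L + 1) := Nat.mul_le_mul_right _ (by omega)
    omega
  obtain ⟨m, hm⟩ : ∃ m, L = m + 2 := by
    refine ⟨L - 2, (Nat.sub_add_cancel ?_).symm⟩
    by_contra! hL
    have : C * (L + 1) ≤ C * 2 := Nat.mul_le_mul_left _ (by omega)
    omega
  rw [hm] at hLn ⊢
  -- `C m ≥ n - 3C ≥ n / 2`
  have hCm : n ≤ 2 * (C * m) := by
    have : C * (m + 2 + 1) = C * m + 3 * C := by ring
    omega
  have hcube : 576 * (C * n ^ 2) ≤ m ^ 3 := by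
    refine Nat.le_of_mul_le_mul_left ?_ (show 0 < 8 * C ^ 3 by positivity)
    calc 8 * C ^ 3 * (576 * (C * n ^ 2)) = 4608 * C ^ 4 * n ^ 2 := by ring
      _ ≤ n * n ^ 2 := Nat.mul_le_mul_right _ hn
      _ = n ^ 3 := by ring
      _ ≤ (2 * (C * m)) ^ 3 := Nat.pow_le_pow_left hCm 3
      _ = 8 * C ^ 3 * m ^ 3 := by ring
  have hdesc : m ^ 3 ≤ 6 * (m + 2).choose 3 := by
    rw [show 6 = Nat.factorial 3 by rfl, ← Nat.descFactorial_eq_factorial_mul_choose]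
    simpa using Nat.pow_sub_le_descFactorial (m + 2) 3
  omega

theorem pow_le_four_mul_card_iterDiff_eq_zero {n C : ℕ} (hC : 2 ≤ C) (hn : 4608 * C ^ 4 ≤ n) :
    C ^ n ≤ 4 * #{x : Fin n → Fin C | iterDiff (n - 1) (extend n C x) 0 = 0} := by
  set F₀ : Finset (Fin n → Fin C) := {x | iterDiff (n - 1) (extend n C x) 0 = 0}
  set F₁ : Finset (Fin n → Fin C) := {x | iterDiff (n - 1) (extend n C x) 0 = 1}
  set F₂ : Finset (Fin n → Fin C) := {x | 2 ≤ iterDiff (n - 1) (extend n C x) 0}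
  set L := (n - 1) / (C - 1)
  have hC4 : C ≤ C ^ 4 := Nat.le_self_pow (by norm_num) C
  have htotal : C ^ n ≤ #F₀ + #F₁ + #F₂ := calc
    C ^ n = #(univ : Finset (Fin n → Fin C)) := by simp
    _ ≤ #(F₀ ∪ F₁ ∪ F₂) := card_le_card fun x _ => by
        simp only [F₀, F₁, F₂, mem_union, mem_filter, mem_univ, true_and]
        omega
    _ ≤ #F₀ + #F₁ + #F₂ := (card_union_le _ _).trans (Nat.add_le_add_right (card_union_le _ _) _)
  have hF₁ : 3 * #F₁ ≤ 2 * C ^ n := by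
    refine Nat.le_of_mul_le_mul_right ?_ (show 0 < C by omega)
    calc 3 * #F₁ * C = 3 * (#F₁ * C) := by ring
      _ ≤ 3 * ((C + 1) / 2 * C ^ n) :=
          Nat.mul_le_mul_left _ (card_iterDiff_eq_one_mul_le C (by omega))
      _ = 3 * ((C + 1) / 2) * C ^ n := by ring
      _ ≤ 2 * C * C ^ n := Nat.mul_le_mul_right _ (by omega)
      _ = 2 * C ^ n * C := by ring
  have hF₂ : 12 * #F₂ ≤ C ^ n := by
    refine Nat.le_of_mul_le_mul_right ?_ (show 0 < C ^ L by positivity)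
    calc 12 * #F₂ * C ^ L = 12 * (#F₂ * C ^ L) := by ring
      _ ≤ 12 * (C * n ^ 2 * (((C + 1) / 2) ^ L * C ^ n)) := Nat.mul_le_mul_left _
          (card_two_le_iterDiff_mul_le (Nat.div_pos (by omega) (by omega))
            ((Nat.mul_le_mul_right _ (by omega)).trans (Nat.mul_div_le _ _)))
      _ = 12 * (C * n ^ 2) * ((C + 1) / 2) ^ L * C ^ n := by ring
      _ ≤ C ^ L * C ^ n := Nat.mul_le_mul_right _
          (twelve_mul_div_two_pow_le_pow hC (mul_sq_le_choose_three hC hn))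
      _ = C ^ n * C ^ L := mul_comm _ _
  omega

/-- For any `C ≥ 2` and `i ≥ (200C²)^{2C}`, the number of tuples
`(a_1,…,a_i) ∈ {0,…,C−1}^i` with `f_{i−1}(a_1,…,a_i) = 0` is at least
`C^i / (200C²)`. -/
theorem stmt6 (C : ℕ) (hC : 2 ≤ C) (i : ℕ) (hi : (200 * C ^ 2) ^ (2 * C) ≤ i) :
    ((C : ℝ) ^ i / (200 * (C : ℝ) ^ 2)) ≤
      (Nat.card {x : Fin i → Fin C // iterDiff (i - 1) (extend i C x) 0 = 0} : ℝ) := by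
  have hi' : 4608 * C ^ 4 ≤ i := calc
    4608 * C ^ 4 ≤ (200 * C ^ 2) ^ 2 := by ring_nf; omega
    _ ≤ (200 * C ^ 2) ^ (2 * C) := Nat.pow_le_pow_right (by positivity) (by omega)
    _ ≤ i := hi
  have hcount : (C : ℝ) ^ i ≤ 4 * #{x : Fin i → Fin C | iterDiff (i - 1) (extend i C x) 0 = 0} :=
    mod_cast pow_le_four_mul_card_iterDiff_eq_zero hC hi'
  have hC' : (2 : ℝ) ≤ C := by exact_mod_cast hC
  have h4 : (4 : ℝ) ≤ 200 * C ^ 2 := by nlinarith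
  rw [Nat.card_eq_fintype_card, Fintype.card_subtype, div_le_iff₀ (by positivity)]
  exact hcount.trans (by rw [mul_comm]; exact mul_le_mul_of_nonneg_left h4 (Nat.cast_nonneg _))
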